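/- arXiv:1906.06417 — 6 statements merged into one kernel-verified Lean document; each statement's English description precedes it below -/
import Mathlib

section
/- Let V, W be orthogonal subspaces of ℂ^n. The pair (V,W) is a support (there exist nonzero vectors v^1,...,v^p ∈ V and w^1,...,w^q ∈ W with ∑_i v^i ∘ conj(v^i) = ∑_j w^j ∘ conj(w^j)) if and only if Φ(σ_V) ∩ Φ(σ_W) ≠ ∅, where σ_V = { c ∈ M_n^h(ℂ) : c ≥ 0, range(c) ⊆ V, tr(c) = 1 }, similarly σ_W, and Φ(m) is the diagonal part of m. -/
/-!
A positive semidefinite matrix whose range lies in `V` is the same thing as a finite sum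
`∑ vᵢ vᵢᴴ` of outer products of nonzero vectors of `V`: factor `c = B Bᴴ` (e.g. `B = √c`); the
columns of `B` span `range (B Bᴴ) = range c`, and zero columns may be dropped. The diagonal of
`∑ vᵢ vᵢᴴ` is `∑ vᵢ ∘ conj vᵢ` and its trace is `∑ ‖vᵢ‖² > 0`, so a support `(vᵢ), (wⱼ)`
yields, after division by the common trace, elements of `σ_V` and `σ_W` with equal diagonals,
and conversely.
-/

open scoped ComplexOrder InnerProductSpace

open Matrix

theorem Fintype.exists_fin_enum_sum_eq {ι N : Type*} [Fintype ι] [AddCommMonoid N]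
    (P : ι → Prop) [DecidablePred P] :
    ∃ (p : ℕ) (e : Fin p → ι), (∀ j, P (e j)) ∧
      ∀ f : ι → N, (∀ i, ¬ P i → f i = 0) → ∑ j, f (e j) = ∑ i, f i := by
  set s := Finset.univ.filter P
  refine ⟨s.card, fun j => s.equivFin.symm j,
    fun j => (Finset.mem_filter.mp (s.equivFin.symm j).2).2, fun f hf => ?_⟩
  rw [Equiv.sum_comp s.equivFin.symm (fun i => f i), Finset.sum_coe_sort s f]
  exact Finset.sum_filter_of_ne fun i _ hi => not_not.mp (mt (hf i) hi)

theorem Matrix.range_mulVecLin_self_mul_conjTranspose {𝕜 m n : Type*} [RCLike 𝕜] [Fintype m]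
    [Fintype n] (A : Matrix m n 𝕜) :
    LinearMap.range (A * Aᴴ).mulVecLin = LinearMap.range A.mulVecLin := by
  refine Submodule.eq_of_le_of_finrank_le ?_ ?_
  · rw [mulVecLin_mul]
    exact LinearMap.range_comp_le_range _ _
  · rw [← rank, ← rank, rank_self_mul_conjTranspose]

theorem Matrix.PosSemidef.inv_trace_smul {𝕜 m : Type*} [RCLike 𝕜] [Fintype m]
    {c : Matrix m m 𝕜} (hc : c.PosSemidef) : (c.trace⁻¹ • c).PosSemidef :=
  hc.smul (inv_nonneg.mpr hc.trace_nonneg)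

section colMatrix

variable {𝕜 m ι : Type*} [RCLike 𝕜] [Fintype ι]

def colMatrix (v : ι → EuclideanSpace 𝕜 m) : Matrix m ι 𝕜 := Matrix.of fun k i => v i k

theorem toLp_colMatrix_mulVec (v : ι → EuclideanSpace 𝕜 m) (y : ι → 𝕜) :
    WithLp.toLp 2 (colMatrix v *ᵥ y) = ∑ i, y i • v i := by
  ext k
  simp [colMatrix, mulVec, dotProduct, mul_comm]

theorem toLp_colMatrix_mulVec_mem {V : Submodule 𝕜 (EuclideanSpace 𝕜 m)}
    {v : ι → EuclideanSpace 𝕜 m} (hv : ∀ i, v i ∈ V) (y : ι → 𝕜) :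
    WithLp.toLp 2 (colMatrix v *ᵥ y) ∈ V := by
  rw [toLp_colMatrix_mulVec]
  exact V.sum_mem fun i _ => V.smul_mem _ (hv i)

theorem toLp_colMatrix_mul_conjTranspose_mulVec_mem [Fintype m]
    {V : Submodule 𝕜 (EuclideanSpace 𝕜 m)} {v : ι → EuclideanSpace 𝕜 m} (hv : ∀ i, v i ∈ V)
    (x : m → 𝕜) : WithLp.toLp 2 ((colMatrix v * (colMatrix v)ᴴ) *ᵥ x) ∈ V := by
  rw [← mulVec_mulVec]
  exact toLp_colMatrix_mulVec_mem hv _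

theorem diag_colMatrix_mul_conjTranspose (v : ι → EuclideanSpace 𝕜 m) (k : m) :
    (colMatrix v * (colMatrix v)ᴴ).diag k = ∑ i, v i k * star (v i k) := by
  simp [colMatrix, mul_apply]

theorem trace_colMatrix_mul_conjTranspose_ne_zero [Fintype m] {p : ℕ} (hp : 0 < p)
    {v : Fin p → EuclideanSpace 𝕜 m} (hv : ∀ i, v i ≠ 0) :
    (colMatrix v * (colMatrix v)ᴴ).trace ≠ 0 := by
  rw [Ne, trace_mul_conjTranspose_self_eq_zero_iff]
  intro h
  apply hv ⟨0, hp⟩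
  ext k
  exact congr_fun (congr_fun h k) ⟨0, hp⟩

theorem pos_of_trace_colMatrix_mul_conjTranspose_eq_one [Fintype m] {p : ℕ}
    {v : Fin p → EuclideanSpace 𝕜 m} (h : (colMatrix v * (colMatrix v)ᴴ).trace = 1) : 0 < p := by
  refine Nat.pos_of_ne_zero fun hp => ?_
  subst hp
  simp [trace] at h

theorem exists_posSemidef_eq_colMatrix_mul_conjTranspose [Fintype m] [DecidableEq m]
    {V : Submodule 𝕜 (EuclideanSpace 𝕜 m)} {c : Matrix m m 𝕜} (hc : c.PosSemidef)
    (hcV : ∀ x : m → 𝕜, WithLp.toLp 2 (c *ᵥ x) ∈ V) :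
    ∃ (p : ℕ) (v : Fin p → EuclideanSpace 𝕜 m), (∀ i, v i ∈ V) ∧ (∀ i, v i ≠ 0) ∧
      colMatrix v * (colMatrix v)ᴴ = c := by
  obtain ⟨B, rfl⟩ : ∃ B : Matrix m m 𝕜, c = B * Bᴴ := by
    open scoped MatrixOrder in
    obtain ⟨B, hB⟩ := CStarAlgebra.nonneg_iff_eq_star_mul_self.mp hc.nonneg
    exact ⟨Bᴴ, by rw [hB, star_eq_conjTranspose, conjTranspose_conjTranspose]⟩
  set u : m → EuclideanSpace 𝕜 m := fun i => WithLp.toLp 2 (Bᵀ i)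
  have hcol : colMatrix u = B := rfl
  have huV : ∀ i, u i ∈ V := by
    intro i
    obtain ⟨x, hx⟩ : Bᵀ i ∈ LinearMap.range (B * Bᴴ).mulVecLin := by
      rw [range_mulVecLin_self_mul_conjTranspose]
      exact ⟨Pi.single i 1, by ext k; simp⟩
    simpa [u, ← hx] using hcV x
  obtain ⟨p, e, he, hsum⟩ := Fintype.exists_fin_enum_sum_eq (N := 𝕜) fun i => u i ≠ 0
  refine ⟨p, u ∘ e, fun j => huV _, he, ?_⟩
  ext k l
  rw [← hcol]
  simp only [mul_apply, conjTranspose_apply, colMatrix, of_apply, Function.comp_apply]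
  exact hsum (fun i => u i k * star (u i l)) fun i hi => by simp [not_not.mp hi]

end colMatrix

section densityMatricesIn

variable {𝕜 m : Type*} [RCLike 𝕜] [Fintype m]

/-- The set `σ_V` of the paper. -/
def densityMatricesIn (V : Submodule 𝕜 (EuclideanSpace 𝕜 m)) : Set (Matrix m m 𝕜) :=
  {c | c.PosSemidef ∧ (∀ x : m → 𝕜, WithLp.toLp 2 (c *ᵥ x) ∈ V) ∧ c.trace = 1}

theorem inv_trace_smul_mem_densityMatricesIn {V : Submodule 𝕜 (EuclideanSpace 𝕜 m)}
    {c : Matrix m m 𝕜} (hc : c.PosSemidef) (hcV : ∀ x : m → 𝕜, WithLp.toLp 2 (c *ᵥ x) ∈ V)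
    (htr : c.trace ≠ 0) : c.trace⁻¹ • c ∈ densityMatricesIn V := by
  refine ⟨hc.inv_trace_smul, fun x => ?_, ?_⟩
  · rw [smul_mulVec, WithLp.toLp_smul]
    exact V.smul_mem _ (hcV x)
  · rw [trace_smul, smul_eq_mul, inv_mul_cancel₀ htr]

end densityMatricesIn

theorem support_iff_diag_inter_nonempty_general (n : ℕ)
    (V W : Submodule ℂ (EuclideanSpace ℂ (Fin n))) :
    (∃ (p q : ℕ), 0 < p ∧ 0 < q ∧
      ∃ (v : Fin p → EuclideanSpace ℂ (Fin n)) (w : Fin q → EuclideanSpace ℂ (Fin n)),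
        (∀ i, v i ∈ V) ∧ (∀ i, v i ≠ 0) ∧ (∀ j, w j ∈ W) ∧ (∀ j, w j ≠ 0) ∧
        ∀ k : Fin n, ∑ i, v i k * star (v i k) = ∑ j, w j k * star (w j k)) ↔
    (Matrix.diag '' {c : Matrix (Fin n) (Fin n) ℂ | c.PosSemidef ∧
        (∀ x : Fin n → ℂ, (WithLp.toLp 2 (c.mulVec x) : EuclideanSpace ℂ (Fin n)) ∈ V) ∧ c.trace = 1} ∩
     Matrix.diag '' {c : Matrix (Fin n) (Fin n) ℂ | c.PosSemidef ∧
        (∀ x : Fin n → ℂ, (WithLp.toLp 2 (c.mulVec x) : EuclideanSpace ℂ (Fin n)) ∈ W) ∧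
        c.trace = 1}).Nonempty := by
  change _ ↔ (diag '' densityMatricesIn V ∩ diag '' densityMatricesIn W).Nonempty
  constructor
  · rintro ⟨p, q, hp, hq, v, w, hvV, hv0, hwW, hw0, hvw⟩
    set G := colMatrix v * (colMatrix v)ᴴ
    set H := colMatrix w * (colMatrix w)ᴴ
    have hdiag : G.diag = H.diag := funext fun k => by
      rw [diag_colMatrix_mul_conjTranspose, diag_colMatrix_mul_conjTranspose, hvw k]
    have htr : G.trace = H.trace := by unfold trace; rw [hdiag]
    have hG := inv_trace_smul_mem_densityMatricesIn (posSemidef_self_mul_conjTranspose _)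
      (toLp_colMatrix_mul_conjTranspose_mulVec_mem hvV)
      (trace_colMatrix_mul_conjTranspose_ne_zero hp hv0)
    have hH := inv_trace_smul_mem_densityMatricesIn (posSemidef_self_mul_conjTranspose _)
      (toLp_colMatrix_mul_conjTranspose_mulVec_mem hwW)
      (trace_colMatrix_mul_conjTranspose_ne_zero hq hw0)
    exact ⟨_, ⟨_, hG, rfl⟩, _, hH, by rw [diag_smul, diag_smul, hdiag, htr]⟩
  · rintro ⟨x, ⟨c, ⟨hc, hcV, hctr⟩, rfl⟩, d, ⟨hd, hdW, hdtr⟩, hdc⟩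
    obtain ⟨p, v, hvV, hv0, rfl⟩ := exists_posSemidef_eq_colMatrix_mul_conjTranspose hc hcV
    obtain ⟨q, w, hwW, hw0, rfl⟩ := exists_posSemidef_eq_colMatrix_mul_conjTranspose hd hdW
    refine ⟨p, q, pos_of_trace_colMatrix_mul_conjTranspose_eq_one hctr,
      pos_of_trace_colMatrix_mul_conjTranspose_eq_one hdtr, v, w, hvV, hv0, hwW, hw0, fun k => ?_⟩
    rw [← diag_colMatrix_mul_conjTranspose, ← diag_colMatrix_mul_conjTranspose, hdc]

/-- `(V, W)` is a support iff `Φ(σ_V) ∩ Φ(σ_W) ≠ ∅`. -/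
theorem support_iff_diag_inter_nonempty (n : ℕ)
    (V W : Submodule ℂ (EuclideanSpace ℂ (Fin n)))
    (hVW : ∀ v ∈ V, ∀ w ∈ W, ⟪v, w⟫_ℂ = 0) :
    (∃ (p q : ℕ), 0 < p ∧ 0 < q ∧
      ∃ (v : Fin p → EuclideanSpace ℂ (Fin n)) (w : Fin q → EuclideanSpace ℂ (Fin n)),
        (∀ i, v i ∈ V) ∧ (∀ i, v i ≠ 0) ∧ (∀ j, w j ∈ W) ∧ (∀ j, w j ≠ 0) ∧
        ∀ k : Fin n, ∑ i, v i k * star (v i k) = ∑ j, w j k * star (w j k)) ↔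
    (Matrix.diag '' {c : Matrix (Fin n) (Fin n) ℂ | c.PosSemidef ∧
        (∀ x : Fin n → ℂ, (WithLp.toLp 2 (c.mulVec x) : EuclideanSpace ℂ (Fin n)) ∈ V) ∧ c.trace = 1} ∩
     Matrix.diag '' {c : Matrix (Fin n) (Fin n) ℂ | c.PosSemidef ∧
        (∀ x : Fin n → ℂ, (WithLp.toLp 2 (c.mulVec x) : EuclideanSpace ℂ (Fin n)) ∈ W) ∧
        c.trace = 1}).Nonempty :=
  support_iff_diag_inter_nonempty_general n V W
end

section
/- Let V be a subspace of ℂ^n, P_V the orthogonal projection onto V, σ_V = { c Hermitian positive semidefinite : P_V c = c, tr c = 1 }, Σ_V the unit sphere of V, and m : ℂ^n → ℝ^n the map m(v) = (|v_1|²,...,|v_n|²). Then Φ(σ_V) = co(m(Σ_V)), the convex hull of the image of the unit sphere of V under m, where Φ(c) is identified with the vector of diagonal entries of c. -/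
/-!
Spectrally, `c ∈ σ_V` is `∑ₖ λₖ uₖ uₖ*` with `λₖ ≥ 0`, `∑ₖ λₖ = tr c = 1` and orthonormal `uₖ`;
every `uₖ` with `λₖ ≠ 0` lies in the range of `c`, hence in `V`. So the diagonal of `c` is the
convex combination `∑ₖ λₖ m(uₖ)` of points of `m(Σ_V)`. Conversely, `u u* ∈ σ_V` has diagonal
`m(u)` for `u ∈ Σ_V`, and the diagonal image of the convex set `σ_V` is convex.
-/

open scoped ComplexOrder
open Matrix

section

variable {ι : Type*} {𝕜 : Type*} [RCLike 𝕜]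

lemma convex_setOf_exists_diag_eq {s : Set (Matrix ι ι 𝕜)} (hs : Convex ℝ s) :
    Convex ℝ {x : ι → ℝ | ∃ c ∈ s, ∀ i, c i i = x i} := by
  rintro x ⟨c, hc, hcx⟩ y ⟨d, hd, hdy⟩ a b ha hb hab
  exact ⟨a • c + b • d, hs hc hd ha hb hab, fun i => by simp [hcx, hdy]⟩

variable [Fintype ι]

lemma Matrix.mem_of_mulVec_eq_smul {V : Submodule 𝕜 (EuclideanSpace 𝕜 ι)} {c : Matrix ι ι 𝕜}
    (hc : ∀ y, WithLp.toLp 2 (c *ᵥ y) ∈ V) {v : EuclideanSpace 𝕜 ι} {μ : 𝕜}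
    (hv : c *ᵥ v = μ • v) (hμ : μ ≠ 0) : v ∈ V := by
  have hv_eq : WithLp.toLp 2 (c *ᵥ (μ⁻¹ • v.ofLp)) = v := by
    rw [mulVec_smul, hv, smul_smul, inv_mul_cancel₀ hμ, one_smul, WithLp.toLp_ofLp]
  exact hv_eq ▸ hc _

lemma Matrix.IsHermitian.apply_self_eq_sum_eigenvalues_mul_normSq [DecidableEq ι]
    {c : Matrix ι ι ℂ} (hc : c.IsHermitian) (i : ι) :
    c i i = ∑ k, (hc.eigenvalues k : ℂ) * Complex.normSq (hc.eigenvectorBasis k i) := by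
  conv_lhs => rw [hc.spectral_theorem, Unitary.conjStarAlgAut_apply, mul_apply]
  simp only [mul_diagonal, star_apply, IsHermitian.eigenvectorUnitary_apply,
    Function.comp_apply, RCLike.star_def]
  refine Finset.sum_congr rfl fun k _ => ?_
  rw [mul_right_comm, Complex.mul_conj, mul_comm]
  rfl

/-- The set `σ_V`; `P_V c = c` is encoded as `range c ⊆ V`. -/
def densityMatrices (V : Submodule ℂ (EuclideanSpace ℂ ι)) : Set (Matrix ι ι ℂ) :=
  {c | c.PosSemidef ∧ (∀ y, WithLp.toLp 2 (c *ᵥ y) ∈ V) ∧ c.trace = 1}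

variable {V : Submodule ℂ (EuclideanSpace ℂ ι)}

lemma convex_densityMatrices : Convex ℝ (densityMatrices V) := by
  rintro c ⟨hc, hcV, hctr⟩ d ⟨hd, hdV, hdtr⟩ a b ha hb hab
  refine ⟨(hc.smul ha).add (hd.smul hb), fun y => ?_, ?_⟩
  · rw [add_mulVec, smul_mulVec, smul_mulVec, WithLp.toLp_add, WithLp.toLp_smul,
      WithLp.toLp_smul]
    exact V.add_mem (V.smul_mem _ (hcV y)) (V.smul_mem _ (hdV y))
  · rw [trace_add, trace_smul, trace_smul, hctr, hdtr, ← add_smul, hab, one_smul]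

lemma vecMulVec_star_mem_densityMatrices {v : EuclideanSpace ℂ ι} (hv : v ∈ V)
    (hv1 : ‖v‖ = 1) : vecMulVec v (star v) ∈ densityMatrices V := by
  refine ⟨posSemidef_vecMulVec_self_star _, fun y => ?_, ?_⟩
  · rw [vecMulVec_mulVec, op_smul_eq_smul, WithLp.toLp_smul, WithLp.toLp_ofLp]
    exact V.smul_mem _ hv
  · rw [trace_vecMulVec, ← EuclideanSpace.inner_eq_star_dotProduct, inner_self_eq_norm_sq_to_K,
      hv1]
    norm_num

lemma diag_mem_convexHull_of_mem_densityMatrices [DecidableEq ι] {c : Matrix ι ι ℂ}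
    (hc : c ∈ densityMatrices V) {x : ι → ℝ} (hx : ∀ i, c i i = x i) :
    x ∈ convexHull ℝ {y : ι → ℝ | ∃ v ∈ V, ‖v‖ = 1 ∧ y = fun i => Complex.normSq (v i)} := by
  obtain ⟨hpsd, hcV, htr⟩ := hc
  have hH : c.IsHermitian := hpsd.isHermitian
  have hx_eq : x = ∑ k, hH.eigenvalues k • fun i => Complex.normSq (hH.eigenvectorBasis k i) := by
    ext i
    simp only [Finset.sum_apply, Pi.smul_apply, smul_eq_mul]
    exact_mod_cast (hx i).symm.trans (hH.apply_self_eq_sum_eigenvalues_mul_normSq i)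
  have hw_sum : ∑ k, hH.eigenvalues k = 1 := by
    have htr_eq := hH.trace_eq_sum_eigenvalues
    rw [htr, ← RCLike.ofReal_sum] at htr_eq
    exact Complex.ofReal_eq_one.1 htr_eq.symm
  rw [hx_eq, ← finsum_eq_sum_of_fintype]
  refine (convex_convexHull ℝ _).finsum_mem hpsd.eigenvalues_nonneg
    (by rwa [finsum_eq_sum_of_fintype]) fun k hk =>
      subset_convexHull ℝ _ ⟨_, ?_, hH.eigenvectorBasis.orthonormal.1 k, rfl⟩
  refine mem_of_mulVec_eq_smul hcV ?_ (Complex.ofReal_ne_zero.2 hk)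
  rw [hH.mulVec_eigenvectorBasis, RCLike.real_smul_eq_coe_smul (K := ℂ)]
  rfl

end

/-- `Φ(σ_V)` equals the convex hull of the moment image of the unit sphere of `V`. -/
theorem diag_image_eq_convexHull_moment_sphere (n : ℕ)
    (V : Submodule ℂ (EuclideanSpace ℂ (Fin n))) :
    {x : Fin n → ℝ | ∃ c : Matrix (Fin n) (Fin n) ℂ, c.PosSemidef ∧
        (∀ y : Fin n → ℂ, (WithLp.toLp 2 (c.mulVec y) : EuclideanSpace ℂ (Fin n)) ∈ V) ∧
        c.trace = 1 ∧ ∀ i, c i i = (x i : ℂ)} =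
    convexHull ℝ {y : Fin n → ℝ | ∃ v ∈ V, ‖v‖ = 1 ∧
        y = fun i => Complex.normSq (v i)} := by
  ext x
  constructor
  · rintro ⟨c, hpsd, hcV, htr, hx⟩
    exact diag_mem_convexHull_of_mem_densityMatrices ⟨hpsd, hcV, htr⟩ hx
  · intro hx
    have hrank_one : {y : Fin n → ℝ | ∃ v ∈ V, ‖v‖ = 1 ∧ y = fun i => Complex.normSq (v i)} ⊆
        {x | ∃ c ∈ densityMatrices V, ∀ i, c i i = x i} := by
      rintro _ ⟨v, hv, hv1, rfl⟩
      exact ⟨_, vecMulVec_star_mem_densityMatrices hv hv1,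
        fun i => by simp [vecMulVec_apply, Complex.mul_conj]⟩
    obtain ⟨c, ⟨hpsd, hcV, htr⟩, hcx⟩ :=
      convexHull_min hrank_one (convex_setOf_exists_diag_eq convex_densityMatrices) hx
    exact ⟨c, hpsd, hcV, htr, hcx⟩
end

section
/- Let a, c be Hermitian n×n matrices with c positive semidefinite, and suppose c a + a c = η c for some real number η. Then a commutes with c and a c = c a = (η/2) c. -/
open scoped ComplexOrder
open scoped Matrix

lemma aux_trace_conjTranspose_mul_self_eq_zero {m : ℕ} {A : Matrix (Fin m) (Fin m) ℂ}
    (h : (Aᴴ * A).trace = 0) : A = 0 := by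
  have htr : ∑ j, ∑ i, star (A i j) * A i j = 0 := by
    simpa [Matrix.trace, Matrix.diag, Matrix.mul_apply, Matrix.conjTranspose_apply] using h
  have h1 : ∀ j ∈ Finset.univ, ∑ i, star (A i j) * A i j = 0 := by
    rw [← Finset.sum_eq_zero_iff_of_nonneg]
    · exact htr
    · intro j _
      exact Finset.sum_nonneg fun i _ => star_mul_self_nonneg _
  ext i j
  have h2 := (Finset.sum_eq_zero_iff_of_nonneg
    (fun i _ => star_mul_self_nonneg (A i j))).mp (h1 j (Finset.mem_univ j)) i (Finset.mem_univ i)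
  rcases mul_eq_zero.mp h2 with h3 | h3
  · simpa using star_eq_zero.mp h3
  · simpa using h3

/-- If `c ≥ 0`, `a` is Hermitian and `c a + a c = η c`, then `a` commutes with
`c` and `a c = c a = (η/2) c`. -/
theorem commute_of_anticommutator_eq_smul (n : ℕ)
    (a c : Matrix (Fin n) (Fin n) ℂ)
    (ha : a.IsHermitian) (hc : c.PosSemidef) (η : ℝ)
    (h : c * a + a * c = (η : ℂ) • c) :
    a * c = c * a ∧ a * c = ((η / 2 : ℝ) : ℂ) • c := by
  set b : Matrix (Fin n) (Fin n) ℂ := a - ((η / 2 : ℝ) : ℂ) • 1 with hb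
  have hbH : bᴴ = b := by
    simp [hb, Matrix.conjTranspose_sub, Matrix.conjTranspose_smul, ha.eq]
  have hsum : ((η / 2 : ℝ) : ℂ) + ((η / 2 : ℝ) : ℂ) = (η : ℂ) := by push_cast; ring
  have hcb0 : c * b + b * c = 0 := by
    simp only [hb, Matrix.mul_sub, Matrix.sub_mul, Matrix.mul_smul, Matrix.smul_mul,
      mul_one, one_mul]
    rw [sub_add_sub_comm, h, ← add_smul, hsum, sub_self]
  have hcb_neg : c * b = -(b * c) := eq_neg_of_add_eq_zero_left hcb0
  open scoped MatrixOrder in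
  set s := CFC.sqrt c with hs
  open scoped MatrixOrder in
  have hsH : sᴴ = s := (Matrix.nonneg_iff_posSemidef.mp (CFC.sqrt_nonneg c)).1
  open scoped MatrixOrder in
  have hss : s * s = c := CFC.sqrt_mul_sqrt_self c hc.nonneg
  have hM : (s * b)ᴴ * (s * b) = b * c * b := by
    rw [Matrix.conjTranspose_mul, hbH, hsH]
    rw [show b * s * (s * b) = b * (s * s) * b by noncomm_ring, hss]
  have htr0 : ((s * b)ᴴ * (s * b)).trace = 0 := by
    rw [hM]
    have h1 : b * c * b = -(b * b * c) := by
      rw [Matrix.mul_assoc, hcb_neg]; noncomm_ring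
    have h2 : (b * c * b).trace = (b * b * c).trace := by
      rw [Matrix.trace_mul_comm, ← Matrix.mul_assoc]
    have h3 : (b * c * b).trace = -(b * b * c).trace := by
      rw [h1, Matrix.trace_neg]
    rw [h2] at h3 ⊢
    rw [eq_neg_iff_add_eq_zero] at h3
    exact add_self_eq_zero.mp h3
  have hsb : s * b = 0 := aux_trace_conjTranspose_mul_self_eq_zero htr0
  have hcb : c * b = 0 := by rw [← hss, Matrix.mul_assoc, hsb, Matrix.mul_zero]
  have hbc : b * c = 0 := by
    have := congrArg Matrix.conjTranspose hcb
    rwa [Matrix.conjTranspose_mul, hbH, hc.1.eq, Matrix.conjTranspose_zero] at this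
  have hac : a * c = ((η / 2 : ℝ) : ℂ) • c := by
    have : (a - ((η / 2 : ℝ) : ℂ) • 1) * c = 0 := hbc
    rw [Matrix.sub_mul, Matrix.smul_mul, one_mul, sub_eq_zero] at this
    exact this
  have hca : c * a = ((η / 2 : ℝ) : ℂ) • c := by
    have : c * (a - ((η / 2 : ℝ) : ℂ) • 1) = 0 := hcb
    rw [Matrix.mul_sub, Matrix.mul_smul, mul_one, sub_eq_zero] at this
    exact this
  exact ⟨hac.trans hca.symm, hac⟩
end

section
/- Let V = span{v}, W = span{w} be orthogonal one-dimensional subspaces of ℂ^n. Then (V,W) is a support if and only if |v_i|/‖v‖ = |w_i|/‖w‖ for all i = 1,...,n. -/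
open scoped InnerProductSpace

/-- `(V, W)` is a support, i.e. there exist nonzero vectors of `V` and `W`
with equal Hadamard sums. -/
def IsSupport (n : ℕ) (V W : Submodule ℂ (EuclideanSpace ℂ (Fin n))) : Prop :=
  ∃ (p q : ℕ), 0 < p ∧ 0 < q ∧
    ∃ (v : Fin p → EuclideanSpace ℂ (Fin n)) (w : Fin q → EuclideanSpace ℂ (Fin n)),
      (∀ i, v i ∈ V) ∧ (∀ i, v i ≠ 0) ∧ (∀ j, w j ∈ W) ∧ (∀ j, w j ≠ 0) ∧
      ∀ k : Fin n, ∑ i, v i k * star (v i k) = ∑ j, w j k * star (w j k)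

/-! Multiples of a fixed vector contribute `‖z‖²` times a positive weight to every
coordinate of a Hadamard sum, so for one-dimensional subspaces being a support means
that the coordinatewise squared moduli of `v` and `w` are proportional. Summing over
the coordinates identifies the constant of proportionality as `‖w‖² / ‖v‖²`. -/

lemma sum_mul_mul_star_mul {ι : Type*} (s : Finset ι) (c : ι → ℂ) (z : ℂ) :
    ∑ i ∈ s, c i * z * star (c i * z) = ((∑ i ∈ s, ‖c i‖ ^ 2) * ‖z‖ ^ 2 : ℝ) := by
  push_cast
  rw [Finset.sum_mul]
  refine Finset.sum_congr rfl fun i _ => ?_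
  rw [star_mul', mul_mul_mul_comm, Complex.star_def, Complex.mul_conj', Complex.mul_conj']

lemma sum_sq_norm_pos {p : ℕ} (hp : 0 < p) {c : Fin p → ℂ} (hc : ∀ i, c i ≠ 0) :
    0 < ∑ i, ‖c i‖ ^ 2 :=
  haveI : Nonempty (Fin p) := ⟨⟨0, hp⟩⟩
  Finset.sum_pos (fun i _ => pow_pos (norm_pos_iff.mpr (hc i)) 2) Finset.univ_nonempty

lemma isSupport_span_singleton_iff {n : ℕ} {v w : EuclideanSpace ℂ (Fin n)}
    (hv : v ≠ 0) (hw : w ≠ 0) :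
    IsSupport n (Submodule.span ℂ {v}) (Submodule.span ℂ {w}) ↔
      ∃ a b : ℝ, 0 < a ∧ 0 < b ∧ ∀ k, a * ‖v k‖ ^ 2 = b * ‖w k‖ ^ 2 := by
  constructor
  · rintro ⟨p, q, hp, hq, vs, ws, hvs, hvs0, hws, hws0, hsum⟩
    choose c hc using fun i => Submodule.mem_span_singleton.mp (hvs i)
    choose d hd using fun j => Submodule.mem_span_singleton.mp (hws j)
    obtain rfl : vs = fun i => c i • v := funext fun i => (hc i).symm
    obtain rfl : ws = fun j => d j • w := funext fun j => (hd j).symm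
    refine ⟨∑ i, ‖c i‖ ^ 2, ∑ j, ‖d j‖ ^ 2,
      sum_sq_norm_pos hp fun i hi => hvs0 i (by simp [hi]),
      sum_sq_norm_pos hq fun j hj => hws0 j (by simp [hj]), fun k => ?_⟩
    have hk := hsum k
    simp only [PiLp.smul_apply, smul_eq_mul, sum_mul_mul_star_mul] at hk
    exact_mod_cast hk
  · rintro ⟨a, b, ha, hb, hab⟩
    have hsqrt {r : ℝ} (hr : 0 < r) (x : EuclideanSpace ℂ (Fin n)) (hx : x ≠ 0) :
        ((Real.sqrt r : ℂ) • x) ≠ 0 :=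
      smul_ne_zero (by exact_mod_cast (Real.sqrt_pos.mpr hr).ne') hx
    refine ⟨1, 1, one_pos, one_pos, fun _ => (Real.sqrt a : ℂ) • v,
      fun _ => (Real.sqrt b : ℂ) • w,
      fun _ => Submodule.smul_mem _ _ (Submodule.mem_span_singleton_self v),
      fun _ => hsqrt ha v hv,
      fun _ => Submodule.smul_mem _ _ (Submodule.mem_span_singleton_self w),
      fun _ => hsqrt hb w hw, fun k => ?_⟩
    have hsum (r : ℝ) (hr : 0 < r) (z : ℂ) :
        ∑ _ : Fin 1, (Real.sqrt r : ℂ) * z * star ((Real.sqrt r : ℂ) * z) = (r * ‖z‖ ^ 2 : ℝ) := by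
      rw [sum_mul_mul_star_mul, Fin.sum_univ_one, Complex.norm_real, Real.norm_eq_abs,
        sq_abs, Real.sq_sqrt hr.le]
    simp only [PiLp.smul_apply, smul_eq_mul, hsum a ha, hsum b hb, hab k]

lemma exists_mul_sq_norm_eq_iff_div_norm_eq {n : ℕ} {v w : EuclideanSpace ℂ (Fin n)}
    (hv : v ≠ 0) (hw : w ≠ 0) :
    (∃ a b : ℝ, 0 < a ∧ 0 < b ∧ ∀ k, a * ‖v k‖ ^ 2 = b * ‖w k‖ ^ 2) ↔
      ∀ k, ‖v k‖ / ‖v‖ = ‖w k‖ / ‖w‖ := by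
  have hv' : ‖v‖ ≠ 0 := norm_ne_zero_iff.mpr hv
  have hw' : ‖w‖ ≠ 0 := norm_ne_zero_iff.mpr hw
  simp only [div_eq_div_iff hv' hw']
  constructor
  · rintro ⟨a, b, ha, hb, hab⟩ k
    have htotal : a * ‖v‖ ^ 2 = b * ‖w‖ ^ 2 := by
      simp only [EuclideanSpace.norm_sq_eq, Finset.mul_sum, hab]
    have hsq : (a * b) * (‖v k‖ * ‖w‖) ^ 2 = (a * b) * (‖w k‖ * ‖v‖) ^ 2 := by
      linear_combination (b * ‖w‖ ^ 2) * hab k - (b * ‖w k‖ ^ 2) * htotal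
    exact (pow_left_inj₀ (by positivity) (by positivity) two_ne_zero).mp
      (mul_left_cancel₀ (by positivity) hsq)
  · intro h
    refine ⟨‖w‖ ^ 2, ‖v‖ ^ 2, by positivity, by positivity, fun k => ?_⟩
    linear_combination (‖v k‖ * ‖w‖ + ‖w k‖ * ‖v‖) * h k

theorem one_dim_support_iff_general (n : ℕ) (v w : EuclideanSpace ℂ (Fin n))
    (hv : v ≠ 0) (hw : w ≠ 0) :
    IsSupport n (Submodule.span ℂ {v}) (Submodule.span ℂ {w}) ↔
      ∀ i : Fin n, ‖v i‖ / ‖v‖ = ‖w i‖ / ‖w‖ :=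
  (isSupport_span_singleton_iff hv hw).trans (exists_mul_sq_norm_eq_iff_div_norm_eq hv hw)

/-- For one-dimensional orthogonal subspaces `span{v}`, `span{w}`, being a
support is equivalent to `|v_i|/‖v‖ = |w_i|/‖w‖` for all `i`. -/
theorem one_dim_support_iff (n : ℕ) (v w : EuclideanSpace ℂ (Fin n))
    (hv : v ≠ 0) (hw : w ≠ 0) (hvw : ⟪v, w⟫_ℂ = 0) :
    IsSupport n (Submodule.span ℂ {v}) (Submodule.span ℂ {w}) ↔
      ∀ i : Fin n, ‖v i‖ / ‖v‖ = ‖w i‖ / ‖w‖ :=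
  one_dim_support_iff_general n v w hv hw
end

section
/- No support (V,W) with dim V = dim W = 1 in ℂ^n (n ≥ 3, with V = span v where some coordinate v_1 ≠ 0) is an interior point of F_{(1,1)}: for every ε > 0 there exists a pair (V_ε, W_ε) of orthogonal one-dimensional subspaces, with generators converging to those of (V,W) as ε → 0, that is not a support. -/
open scoped InnerProductSpace

lemma support_ratio {n : ℕ} {v w : EuclideanSpace ℂ (Fin n)}
    (h : IsSupport n (Submodule.span ℂ {v}) (Submodule.span ℂ {w})) :
    ∃ A B : ℝ, 0 < A ∧ 0 < B ∧
      ∀ k, A * Complex.normSq (v k) = B * Complex.normSq (w k) := by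
  obtain ⟨p, q, hp, hq, vs, ws, hvm, hvne, hwm, hwne, heq⟩ := h
  choose c hc using fun i => Submodule.mem_span_singleton.mp (hvm i)
  choose d hd using fun j => Submodule.mem_span_singleton.mp (hwm j)
  have hcne : ∀ i, c i ≠ 0 := by
    intro i h0
    apply hvne i
    rw [← hc i, h0, zero_smul]
  have hdne : ∀ j, d j ≠ 0 := by
    intro j h0
    apply hwne j
    rw [← hd j, h0, zero_smul]
  refine ⟨∑ i, Complex.normSq (c i), ∑ j, Complex.normSq (d j), ?_, ?_, ?_⟩
  · exact Finset.sum_pos (fun i _ => Complex.normSq_pos.mpr (hcne i))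
      ⟨⟨0, hp⟩, Finset.mem_univ _⟩
  · exact Finset.sum_pos (fun j _ => Complex.normSq_pos.mpr (hdne j))
      ⟨⟨0, hq⟩, Finset.mem_univ _⟩
  · intro k
    have key : ∀ (m : ℕ) (e : Fin m → ℂ) (us : Fin m → EuclideanSpace ℂ (Fin n))
        (x : EuclideanSpace ℂ (Fin n)) (he : ∀ i, e i • x = us i),
        ∑ i, us i k * star (us i k) =
          ((∑ i, Complex.normSq (e i) : ℝ) : ℂ) * ((Complex.normSq (x k) : ℝ) : ℂ) := by
      intro m e us x he
      have h1 : ∀ i, us i k = e i * x k := by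
        intro i; rw [← he i]; rfl
      calc ∑ i, us i k * star (us i k)
          = ∑ i, ((Complex.normSq (e i) : ℂ) * (Complex.normSq (x k) : ℂ)) := by
            refine Finset.sum_congr rfl fun i _ => ?_
            rw [h1 i]
            simp only [star_mul', Complex.star_def]
            rw [show e i * x k * (starRingEnd ℂ (e i) * starRingEnd ℂ (x k))
                = (e i * starRingEnd ℂ (e i)) * (x k * starRingEnd ℂ (x k)) by ring,
              Complex.mul_conj, Complex.mul_conj]
        _ = _ := by rw [← Finset.sum_mul]; push_cast; ring
    have h2 := key p c vs v hc
    have h3 := key q d ws w hd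
    have h4 := heq k
    rw [h2, h3] at h4
    rw [← Complex.ofReal_mul, ← Complex.ofReal_mul] at h4
    exact Complex.ofReal_inj.mp h4

/-- No support of one-dimensional subspaces is interior in `F_{(1,1)}`:
arbitrarily close to the generators there are orthogonal one-dimensional pairs
that are not supports. -/
theorem one_dim_support_not_interior (n : ℕ) (hn : 3 ≤ n)
    (v w : EuclideanSpace ℂ (Fin n)) (hv : v ≠ 0) (hw : w ≠ 0)
    (i₀ : Fin n) (hvi₀ : v i₀ ≠ 0) (hvw : ⟪v, w⟫_ℂ = 0)
    (hsupp : IsSupport n (Submodule.span ℂ {v}) (Submodule.span ℂ {w})) :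
    ∀ ε > (0 : ℝ), ∃ v' w' : EuclideanSpace ℂ (Fin n),
      v' ≠ 0 ∧ w' ≠ 0 ∧ ⟪v', w'⟫_ℂ = 0 ∧ ‖v' - v‖ < ε ∧ ‖w' - w‖ < ε ∧
      ¬ IsSupport n (Submodule.span ℂ {v'}) (Submodule.span ℂ {w'}) := by
  intro ε hε
  obtain ⟨A, B, hA, hB, hratio⟩ := support_ratio hsupp
  have hwi₀ : w i₀ ≠ 0 := by
    intro h0
    have h1 := hratio i₀
    rw [h0, Complex.normSq_zero, mul_zero] at h1
    nlinarith [Complex.normSq_pos.mpr hvi₀]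
  obtain ⟨k₁, hk₁ne, hvk₁⟩ : ∃ k₁, k₁ ≠ i₀ ∧ v k₁ ≠ 0 := by
    by_contra h
    push_neg at h
    have h1 : ⟪v, w⟫_ℂ = starRingEnd ℂ (v i₀) * w i₀ := by
      rw [PiLp.inner_apply]
      rw [Finset.sum_eq_single i₀]
      · simp [RCLike.inner_apply]; ring
      · intro b _ hb
        rw [h b hb]
        simp
      · intro hb
        exact absurd (Finset.mem_univ i₀) hb
    rw [h1] at hvw
    rcases mul_eq_zero.mp hvw with h2 | h2
    · exact hvi₀ (by simpa using h2)
    · exact hwi₀ h2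
  have hwk₁ : w k₁ ≠ 0 := by
    intro h0
    have h1 := hratio k₁
    rw [h0, Complex.normSq_zero, mul_zero] at h1
    nlinarith [Complex.normSq_pos.mpr hvk₁]
  set δ : ℝ := ε / (‖v i₀‖ + ‖w i₀‖ + 1) with hδdef
  have hδ : 0 < δ := by positivity
  have h1δ : (0:ℝ) < 1 + δ := by linarith
  have hδv : δ * ‖v i₀‖ < ε := by
    rw [hδdef, div_mul_eq_mul_div, div_lt_iff₀ (by positivity)]
    nlinarith [norm_nonneg (v i₀), norm_nonneg (w i₀)]
  have hδw : δ * ‖w i₀‖ < ε := by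
    rw [hδdef, div_mul_eq_mul_div, div_lt_iff₀ (by positivity)]
    nlinarith [norm_nonneg (v i₀), norm_nonneg (w i₀)]
  set v' : EuclideanSpace ℂ (Fin n) :=
    v + EuclideanSpace.single i₀ (((((1+δ)⁻¹ - 1 : ℝ)) : ℂ) * v i₀) with hv'def
  set w' : EuclideanSpace ℂ (Fin n) :=
    w + EuclideanSpace.single i₀ (((δ : ℝ) : ℂ) * w i₀) with hw'def
  have hv'i₀ : v' i₀ = ((((1+δ)⁻¹ : ℝ)) : ℂ) * v i₀ := by
    rw [hv'def]
    simp only [PiLp.add_apply, EuclideanSpace.single_apply, if_pos rfl]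
    push_cast
    ring
  have hw'i₀ : w' i₀ = (((1+δ : ℝ)) : ℂ) * w i₀ := by
    rw [hw'def]
    simp only [PiLp.add_apply, EuclideanSpace.single_apply, if_pos rfl]
    push_cast
    ring
  have hv'k : ∀ k, k ≠ i₀ → v' k = v k := by
    intro k hk
    rw [hv'def]
    simp [EuclideanSpace.single_apply, hk]
  have hw'k : ∀ k, k ≠ i₀ → w' k = w k := by
    intro k hk
    rw [hw'def]
    simp [EuclideanSpace.single_apply, hk]
  have hinv_ne : ((1+δ)⁻¹ : ℝ) ≠ 0 := by positivity
  refine ⟨v', w', ?_, ?_, ?_, ?_, ?_, ?_⟩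
  · intro h0
    apply hvi₀
    have : v' i₀ = 0 := by rw [h0]; rfl
    rw [hv'i₀] at this
    rcases mul_eq_zero.mp this with h2 | h2
    · exact absurd h2 (Complex.ofReal_ne_zero.mpr hinv_ne)
    · exact h2
  · intro h0
    apply hwi₀
    have : w' i₀ = 0 := by rw [h0]; rfl
    rw [hw'i₀] at this
    rcases mul_eq_zero.mp this with h2 | h2
    · exact absurd h2 (Complex.ofReal_ne_zero.mpr (by positivity))
    · exact h2
  · rw [← hvw, PiLp.inner_apply, PiLp.inner_apply]
    refine Finset.sum_congr rfl fun k _ => ?_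
    by_cases hk : k = i₀
    · subst hk
      rw [hv'i₀, hw'i₀]
      simp only [RCLike.inner_apply, map_mul, Complex.conj_ofReal]
      have : (((1+δ)⁻¹ : ℝ) : ℂ) * ((1+δ : ℝ) : ℂ) = 1 := by
        rw [← Complex.ofReal_mul, inv_mul_cancel₀ (ne_of_gt h1δ)]
        norm_num
      calc (((1+δ : ℝ)) : ℂ) * w k * (((( (1+δ)⁻¹ : ℝ)) : ℂ) * starRingEnd ℂ (v k))
          = ((((1+δ)⁻¹ : ℝ) : ℂ) * (((1+δ : ℝ)) : ℂ)) * (starRingEnd ℂ (v k) * w k) := by ring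
        _ = w k * starRingEnd ℂ (v k) := by rw [this, one_mul, mul_comm]
    · rw [hv'k k hk, hw'k k hk]
  · have hsub : v' - v = EuclideanSpace.single i₀ (((((1+δ)⁻¹ - 1 : ℝ)) : ℂ) * v i₀) :=
      add_sub_cancel_left v _
    rw [hsub, EuclideanSpace.norm_single, norm_mul, Complex.norm_real]
    have habs : ‖((1+δ)⁻¹ - 1 : ℝ)‖ ≤ δ := by
      rw [Real.norm_eq_abs, abs_of_nonpos (by nlinarith [inv_mul_cancel₀ (ne_of_gt h1δ), inv_pos.mpr h1δ])]
      nlinarith [inv_mul_cancel₀ (ne_of_gt h1δ), inv_pos.mpr h1δ]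
    calc ‖((1+δ)⁻¹ - 1 : ℝ)‖ * ‖v i₀‖ ≤ δ * ‖v i₀‖ :=
          mul_le_mul_of_nonneg_right habs (norm_nonneg _)
      _ < ε := hδv
  · have hsub : w' - w = EuclideanSpace.single i₀ (((δ : ℝ) : ℂ) * w i₀) :=
      add_sub_cancel_left w _
    rw [hsub, EuclideanSpace.norm_single, norm_mul, Complex.norm_real]
    calc ‖(δ : ℝ)‖ * ‖w i₀‖ = δ * ‖w i₀‖ := by rw [Real.norm_eq_abs, abs_of_pos hδ]
      _ < ε := hδw
  · intro hS
    obtain ⟨A', B', hA', hB', hr'⟩ := support_ratio hS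
    have e1 := hr' k₁
    rw [hv'k k₁ hk₁ne, hw'k k₁ hk₁ne] at e1
    have e2 := hr' i₀
    rw [hv'i₀, hw'i₀, Complex.normSq_mul, Complex.normSq_mul,
      Complex.normSq_ofReal, Complex.normSq_ofReal] at e2
    have e3 := hratio k₁
    have e4 := hratio i₀
    have hs : 0 < Complex.normSq (w k₁) := Complex.normSq_pos.mpr hwk₁
    have hx : 0 < Complex.normSq (v i₀) := Complex.normSq_pos.mpr hvi₀
    have hy : 0 < Complex.normSq (w i₀) := Complex.normSq_pos.mpr hwi₀
    have hp : 0 < Complex.normSq (v k₁) := Complex.normSq_pos.mpr hvk₁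
    have hAB : A' * B = A * B' := by
      apply mul_right_cancel₀ (ne_of_gt hs)
      linear_combination A * e1 - A' * e3
    have hinv : ((1+δ)⁻¹ : ℝ) * (1+δ) = 1 := inv_mul_cancel₀ (ne_of_gt h1δ)
    have key : A * Complex.normSq (v i₀) * ((1+δ)⁻¹ * (1+δ)⁻¹)
        = A * Complex.normSq (v i₀) * ((1+δ) * (1+δ)) := by
      apply mul_right_cancel₀ (ne_of_gt hB')
      linear_combination B * e2 - ((1+δ)⁻¹ * (1+δ)⁻¹ * Complex.normSq (v i₀)) * hAB
        - ((1+δ) * (1+δ) * B') * e4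
    have ht2 : ((1+δ)⁻¹ : ℝ) * (1+δ)⁻¹ = (1+δ) * (1+δ) :=
      mul_left_cancel₀ (ne_of_gt (mul_pos hA hx)) key
    have h8 : ((1+δ) : ℝ) * (1+δ) * ((1+δ) * (1+δ)) = 1 := by
      linear_combination (-(1+δ) * (1+δ)) * ht2 + ((1+δ)⁻¹ * (1+δ) + 1) * hinv
    have h9 : (1:ℝ) < (1+δ) * (1+δ) * ((1+δ) * (1+δ)) := by nlinarith [hδ, sq_nonneg δ]
    linarith
end

section
/- Let (a,b) be a critical point of F with a, b rank-one projections given by unit vectors ã ∈ ℂ^r, b̃ ∈ ℂ^s, and set α_k = ⟨ã, 𝒱* e_k⟩, β_k = ⟨b̃, 𝒲* e_k⟩. Then the Lagrange multipliers λ, μ in the criticality equations S_a(𝒱*Δ𝒱) = λ a, S_b(𝒲*Δ𝒲) = μ b are real, given by λ/2 = ∑_k (|α_k|² − |β_k|²)|α_k|² and μ/2 = ∑_k (|α_k|² − |β_k|²)|β_k|², and satisfy λ − μ = 2 ∑_k (|α_k|² − |β_k|²)² ≥ 0, hence λ ≥ μ. -/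
/-!
Since `a` and `b` are rank-one projections, `𝒱 a² 𝒱ᴴ = α αᴴ` and `𝒲 b² 𝒲ᴴ = β βᴴ`, so `Δ` is the
real diagonal matrix with entries `d k = |α k|² - |β k|²`. Taking traces in `a X + X a = λ a`
with `tr a = 1` gives `λ = 2 tr (a X)`, and for `X = 𝒱ᴴ Δ 𝒱` this trace is `∑ k, d k |α k|²`;
likewise for `μ`. Subtracting, `λ - μ = 2 ∑ k, d k ²`, which is nonnegative.
-/

open Matrix

namespace Matrix

theorem mul_vecMulVec_star_mul_conjTranspose {m n R : Type*} [Fintype n] [CommSemiring R]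
    [StarRing R] (V : Matrix m n R) (v : n → R) :
    V * vecMulVec v (star v) * Vᴴ = vecMulVec (V *ᵥ v) (star (V *ᵥ v)) := by
  rw [mul_vecMulVec, vecMulVec_mul, star_mulVec]

theorem vecMulVec_star_mul_self {n R : Type*} [Fintype n] [CommSemiring R] [StarRing R]
    {v : n → R} (hv : star v ⬝ᵥ v = 1) :
    vecMulVec v (star v) * vecMulVec v (star v) = vecMulVec v (star v) := by
  rw [vecMulVec_mul_vecMulVec, hv, one_smul]

theorem eq_two_mul_trace_of_mul_add_mul_eq_smul {n R : Type*} [Fintype n] [CommRing R]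
    {a X : Matrix n n R} {c : R} (ha : trace a = 1) (h : a * X + X * a = c • a) :
    c = 2 * trace (a * X) := by
  have := congrArg trace h
  rwa [trace_add, trace_smul, trace_mul_comm X a, ha, smul_eq_mul, mul_one, ← two_mul,
    eq_comm] at this

end Matrix

namespace Complex

variable {m n : Type*} [Fintype m] [Fintype n]

theorem star_dotProduct_self (v : n → ℂ) :
    star v ⬝ᵥ v = ((∑ j, normSq (v j) : ℝ) : ℂ) := by
  push_cast
  simp [dotProduct, normSq_eq_conj_mul_self]

theorem trace_vecMulVec_star_mul_conjTranspose_diagonal_mul [DecidableEq m]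
    (V : Matrix m n ℂ) (v : n → ℂ) (d : m → ℝ) :
    trace (vecMulVec v (star v) * (Vᴴ * diagonal (fun k => (d k : ℂ)) * V)) =
      ((∑ k, d k * normSq ((V *ᵥ v) k) : ℝ) : ℂ) := by
  rw [← Matrix.mul_assoc, ← Matrix.mul_assoc, trace_mul_comm, ← Matrix.mul_assoc,
    ← Matrix.mul_assoc, mul_vecMulVec_star_mul_conjTranspose, vecMulVec_mul, trace_vecMulVec]
  push_cast
  refine Finset.sum_congr rfl fun k _ => ?_
  rw [vecMul_diagonal, Pi.star_apply, normSq_eq_conj_mul_self, RCLike.star_def]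
  ring

theorem multiplier_eq_of_vecMulVec_star [DecidableEq m] {V : Matrix m n ℂ} {v : n → ℂ}
    (hv : ∑ j, normSq (v j) = 1) (d : m → ℝ) {c : ℂ}
    (h : vecMulVec v (star v) * (Vᴴ * diagonal (fun k => (d k : ℂ)) * V) +
        (Vᴴ * diagonal (fun k => (d k : ℂ)) * V) * vecMulVec v (star v) =
      c • vecMulVec v (star v)) :
    c = ((2 * ∑ k, d k * normSq ((V *ᵥ v) k) : ℝ) : ℂ) := by
  have htrace : trace (vecMulVec v (star v)) = 1 := by
    rw [trace_vecMulVec, dotProduct_comm, star_dotProduct_self, hv, ofReal_one]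
  rw [eq_two_mul_trace_of_mul_add_mul_eq_smul htrace h,
    trace_vecMulVec_star_mul_conjTranspose_diagonal_mul, ofReal_mul, ofReal_ofNat]

end Complex

theorem critical_point_multipliers_general (n r s : ℕ)
    (𝒱 : Matrix (Fin n) (Fin r) ℂ) (𝒲 : Matrix (Fin n) (Fin s) ℂ)
    (av : Fin r → ℂ) (bv : Fin s → ℂ)
    (hat : ∑ j, Complex.normSq (av j) = 1) (hbt : ∑ j, Complex.normSq (bv j) = 1)
    (a : Matrix (Fin r) (Fin r) ℂ) (b : Matrix (Fin s) (Fin s) ℂ)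
    (ha : a = Matrix.vecMulVec av (star av)) (hb : b = Matrix.vecMulVec bv (star bv))
    (Δ : Matrix (Fin n) (Fin n) ℂ)
    (hΔ : Δ = Matrix.diagonal (fun k =>
        (𝒱 * (a * a) * 𝒱ᴴ) k k - (𝒲 * (b * b) * 𝒲ᴴ) k k))
    (lam mu : ℂ)
    (hcrit₁ : a * (𝒱ᴴ * Δ * 𝒱) + (𝒱ᴴ * Δ * 𝒱) * a = lam • a)
    (hcrit₂ : b * (𝒲ᴴ * Δ * 𝒲) + (𝒲ᴴ * Δ * 𝒲) * b = mu • b)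
    (α : Fin n → ℂ) (hα : α = 𝒱.mulVec av)
    (β : Fin n → ℂ) (hβ : β = 𝒲.mulVec bv) :
    lam = ((2 * ∑ k, (Complex.normSq (α k) - Complex.normSq (β k)) *
        Complex.normSq (α k) : ℝ) : ℂ) ∧
    mu = ((2 * ∑ k, (Complex.normSq (α k) - Complex.normSq (β k)) *
        Complex.normSq (β k) : ℝ) : ℂ) ∧
    lam - mu = ((2 * ∑ k,
        (Complex.normSq (α k) - Complex.normSq (β k)) ^ 2 : ℝ) : ℂ) ∧
    mu.re ≤ lam.re := by
  set d : Fin n → ℝ := fun k => Complex.normSq (α k) - Complex.normSq (β k)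
  have hΔd : Δ = diagonal (fun k => (d k : ℂ)) := by
    have hav : star av ⬝ᵥ av = 1 := by rw [Complex.star_dotProduct_self, hat, Complex.ofReal_one]
    have hbv : star bv ⬝ᵥ bv = 1 := by rw [Complex.star_dotProduct_self, hbt, Complex.ofReal_one]
    rw [hΔ, ha, hb, vecMulVec_star_mul_self hav, vecMulVec_star_mul_self hbv,
      mul_vecMulVec_star_mul_conjTranspose, mul_vecMulVec_star_mul_conjTranspose, ← hα, ← hβ]
    congr 1 with k
    simp only [d, vecMulVec_apply, Pi.star_apply, RCLike.star_def, Complex.mul_conj,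
      Complex.ofReal_sub]
  subst ha hb hα hβ
  rw [hΔd] at hcrit₁ hcrit₂
  have hlam := Complex.multiplier_eq_of_vecMulVec_star hat d hcrit₁
  have hmu := Complex.multiplier_eq_of_vecMulVec_star hbt d hcrit₂
  have hdiff : lam - mu = ((2 * ∑ k, d k ^ 2 : ℝ) : ℂ) := by
    rw [hlam, hmu, ← Complex.ofReal_sub, ← mul_sub, ← Finset.sum_sub_distrib]
    simp only [d, ← mul_sub, sq]
  refine ⟨hlam, hmu, hdiff, ?_⟩
  have hre := congrArg Complex.re hdiff
  rw [Complex.sub_re, Complex.ofReal_re] at hre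
  linarith [show (0 : ℝ) ≤ 2 * ∑ k, d k ^ 2 by positivity]

/-- At a critical point of `F` given by rank-one projections `a = av atᴴ`,
`b = bv btᴴ`, the Lagrange multipliers are real, given explicitly by moments of
`α = 𝒱 av`, `β = 𝒲 bv`, and satisfy `λ ≥ μ`. -/
theorem critical_point_multipliers (n r s : ℕ)
    (𝒱 : Matrix (Fin n) (Fin r) ℂ) (𝒲 : Matrix (Fin n) (Fin s) ℂ)
    (h𝒱 : 𝒱ᴴ * 𝒱 = 1) (h𝒲 : 𝒲ᴴ * 𝒲 = 1) (h𝒱𝒲 : 𝒱ᴴ * 𝒲 = 0)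
    (av : Fin r → ℂ) (bv : Fin s → ℂ)
    (hat : ∑ j, Complex.normSq (av j) = 1) (hbt : ∑ j, Complex.normSq (bv j) = 1)
    (a : Matrix (Fin r) (Fin r) ℂ) (b : Matrix (Fin s) (Fin s) ℂ)
    (ha : a = Matrix.vecMulVec av (star av)) (hb : b = Matrix.vecMulVec bv (star bv))
    (Δ : Matrix (Fin n) (Fin n) ℂ)
    (hΔ : Δ = Matrix.diagonal (fun k =>
        (𝒱 * (a * a) * 𝒱ᴴ) k k - (𝒲 * (b * b) * 𝒲ᴴ) k k))
    (lam mu : ℂ)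
    (hcrit₁ : a * (𝒱ᴴ * Δ * 𝒱) + (𝒱ᴴ * Δ * 𝒱) * a = lam • a)
    (hcrit₂ : b * (𝒲ᴴ * Δ * 𝒲) + (𝒲ᴴ * Δ * 𝒲) * b = mu • b)
    (α : Fin n → ℂ) (hα : α = 𝒱.mulVec av)
    (β : Fin n → ℂ) (hβ : β = 𝒲.mulVec bv) :
    lam = ((2 * ∑ k, (Complex.normSq (α k) - Complex.normSq (β k)) *
        Complex.normSq (α k) : ℝ) : ℂ) ∧
    mu = ((2 * ∑ k, (Complex.normSq (α k) - Complex.normSq (β k)) *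
        Complex.normSq (β k) : ℝ) : ℂ) ∧
    lam - mu = ((2 * ∑ k,
        (Complex.normSq (α k) - Complex.normSq (β k)) ^ 2 : ℝ) : ℂ) ∧
    mu.re ≤ lam.re :=
  critical_point_multipliers_general n r s 𝒱 𝒲 av bv hat hbt a b ha hb Δ hΔ lam mu hcrit₁ hcrit₂ α
    hα β hβ
end
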